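/- arXiv:2012.00979 — 2 statements merged into one kernel-verified Lean document; each statement's English description precedes it below -/
import Mathlib

section
/- Let t = p^s for a prime p and positive integer s. Let G be an abelian group of order t⁴c² with subgroups Q ≤ G' ≤ G where Q ≅ (Z_p)^{2s} and G/G' ≅ (Z_p)^{2s}. Let H₀,…,H_t be subgroups of G forming a spread when viewed as subgroups of Q, and V₀,…,V_t subgroups of G such that {V₀/G',…,V_t/G'} is a spread of G/G' and H_i ≤ V_i for i=1,…,t. If for each i = 1,…,t there exists a (c,t) LP-partition in V_i/H_i − G'/H_i relative to Q/H_i, then there exists a (tc,t) LP-partition in G − V₀ relative to H₀. -/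
open Finset BigOperators

variable {G : Type*}

/-- Number of ordered pairs `(x,y)` with `x,y ∈ D`, `x ≠ y`, `x * y⁻¹ = g`. -/
noncomputable def diffCount [Group G] (D : Set G) (g : G) : ℕ :=
  Nat.card {p : G × G // p.1 ∈ D ∧ p.2 ∈ D ∧ p.1 ≠ p.2 ∧ p.1 * p.2⁻¹ = g}

/-- `D` is a `(v,k,λ,μ)` partial difference set in `G`. -/
def IsPDS [Group G] (D : Set G) (v k : ℕ) (l m : ℤ) : Prop :=
  Nat.card G = v ∧ Nat.card D = k ∧
    ∀ g : G, g ≠ 1 →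
      (g ∈ D → (diffCount D g : ℤ) = l) ∧ (g ∉ D → (diffCount D g : ℤ) = m)

/-- A regular PDS: a PDS avoiding the identity and closed under inversion. -/
def IsRegularPDS [Group G] (D : Set G) (v k : ℕ) (l m : ℤ) : Prop :=
  IsPDS D v k l m ∧ (1 : G) ∉ D ∧ D⁻¹ = D

/-- A regular `(n,r)` Latin square type PDS. -/
def IsLatinPDS [Group G] (D : Set G) (n r : ℕ) : Prop :=
  IsRegularPDS D (n ^ 2) (r * (n - 1)) ((n : ℤ) + (r : ℤ) ^ 2 - 3 * r) ((r : ℤ) ^ 2 - r)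

/-- A regular `(n,r)` negative Latin square type PDS. -/
def IsNegLatinPDS [Group G] (D : Set G) (n r : ℕ) : Prop :=
  IsRegularPDS D (n ^ 2) (r * (n + 1)) (-(n : ℤ) + (r : ℤ) ^ 2 + 3 * r) ((r : ℤ) ^ 2 + r)

/-- Character sum `χ(D) = ∑_{d ∈ D} χ(d)`. -/
noncomputable def charSum [Group G] (χ : G →* ℂˣ) (D : Set G) : ℂ :=
  ∑ᶠ d ∈ D, (χ d : ℂ)

/-- The multiset of character sums `{χ(P 0), …, χ(P (t-1))}`. -/
noncomputable def charMultiset [Group G] {t : ℕ} (χ : G →* ℂˣ) (P : Fin t → Set G) :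
    Multiset ℂ :=
  (Finset.univ.val : Multiset (Fin t)).map fun i => charSum χ (P i)

/-- `χ` is principal on the subgroup `U`. -/
def IsPrincipalOn [Group G] (χ : G →* ℂˣ) (U : Subgroup G) : Prop :=
  ∀ u ∈ U, χ u = 1

/-- A `(c,t)` LP-packing in `G` relative to `U`. -/
def IsLPPacking [CommGroup G] (c t : ℕ) (P : Fin t → Set G) (U : Subgroup G) : Prop :=
  Nat.card G = t ^ 2 * c ^ 2 ∧ Nat.card U = t * c ∧
    (∀ i, IsLatinPDS (P i) (t * c) c) ∧
    (∀ i j, i ≠ j → Disjoint (P i) (P j)) ∧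
    (⋃ i, P i) = Set.univ \ (U : Set G)

/-- A `(c,t-1)` NLP-packing in `G`. -/
def IsNLPPacking [CommGroup G] (c t : ℕ) (P : Fin (t - 1) → Set G) : Prop :=
  Nat.card G = t ^ 2 * c ^ 2 ∧
    (∀ i, IsNegLatinPDS (P i) (t * c) c) ∧
    IsNegLatinPDS (Set.univ \ ({1} ∪ ⋃ i, P i)) (t * c) (c - 1)

/-- A `(c,t)` LP-partition in `G − V` relative to `H`. -/
def IsLPPartition [CommGroup G] (c t : ℕ) (R : Fin t → Set G) (V H : Subgroup G) : Prop :=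
  Nat.card G = t ^ 2 * c ^ 2 ∧ Nat.card V = t * c ^ 2 ∧ H ≤ V ∧
    (∀ i, Nat.card (R i) = (t - 1) * c ^ 2) ∧
    (∀ i j, i ≠ j → Disjoint (R i) (R j)) ∧
    (⋃ i, R i) = Set.univ \ (V : Set G) ∧
    ∀ χ : G →* ℂˣ, χ ≠ 1 →
      (IsPrincipalOn χ V → charMultiset χ R = Multiset.replicate t (-(c : ℂ) ^ 2)) ∧
      (¬ IsPrincipalOn χ V → IsPrincipalOn χ H →
        charMultiset χ R = Multiset.replicate t 0) ∧
      (¬ IsPrincipalOn χ H →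
        charMultiset χ R = ((t : ℂ) - 1) * (c : ℂ) ::ₘ Multiset.replicate (t - 1) (-(c : ℂ)))

section helpersA
variable [Group G] [Finite G] (χ : G →* ℂˣ)

lemma charSum_eq (D : Set G) :
    charSum χ D = ∑ d ∈ (Set.toFinite D).toFinset, (χ d : ℂ) :=
  finsum_mem_eq_finite_toFinset_sum _ _

lemma charSum_of_forall_eq_one {D : Set G} (h : ∀ d ∈ D, χ d = 1) :
    charSum χ D = (Nat.card D : ℂ) := by
  rw [charSum_eq]
  have hcard : (Nat.card D : ℂ) = ∑ _d ∈ (Set.toFinite D).toFinset, (1 : ℂ) := by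
    rw [Finset.sum_const, nsmul_eq_mul, mul_one, Nat.card_coe_set_eq,
      Set.ncard_eq_toFinset_card _ (Set.toFinite D)]
  rw [hcard]
  exact Finset.sum_congr rfl fun d hd => by
    rw [h d ((Set.Finite.mem_toFinset _).mp hd), Units.val_one]

lemma charSum_eq_zero_of_shift {D : Set G} {h₀ : G} (hne : χ h₀ ≠ 1)
    (hcl : ∀ d ∈ D, d * h₀ ∈ D) : charSum χ D = 0 := by
  classical
  set T := (Set.toFinite D).toFinset with hT
  have hmem : ∀ d, d ∈ T ↔ d ∈ D := fun d => Set.Finite.mem_toFinset _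
  have himg : T.image (· * h₀) = T := by
    apply Finset.eq_of_subset_of_card_le
    · intro x hx
      obtain ⟨d, hd, rfl⟩ := Finset.mem_image.mp hx
      exact (hmem _).mpr (hcl d ((hmem _).mp hd))
    · rw [Finset.card_image_of_injective _ (mul_left_injective h₀)]
  have hsum : ∑ d ∈ T, (χ d : ℂ) = ∑ d ∈ T, (χ (d * h₀) : ℂ) := by
    conv_lhs => rw [← himg]
    rw [Finset.sum_image (fun a _ b _ h => mul_left_injective h₀ h)]
  have h2 : ∑ d ∈ T, (χ d : ℂ) = (χ h₀ : ℂ) * ∑ d ∈ T, (χ d : ℂ) := by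
    conv_lhs => rw [hsum]
    rw [Finset.mul_sum]
    exact Finset.sum_congr rfl fun d _ => by rw [map_mul, Units.val_mul]; ring
  have hne' : (χ h₀ : ℂ) ≠ 1 := fun h => hne (Units.ext h)
  have key : (1 - (χ h₀ : ℂ)) * ∑ d ∈ T, (χ d : ℂ) = 0 := by linear_combination h2
  rcases mul_eq_zero.mp key with h | h
  · exact absurd (by linear_combination -h) hne'
  · rw [charSum_eq]; exact h

lemma charSum_subgroup_of_not_principal {U : Subgroup G} (h : ¬ IsPrincipalOn χ U) :
    charSum χ (U : Set G) = 0 := by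
  simp only [IsPrincipalOn, not_forall] at h
  obtain ⟨u, hu, hne⟩ := h
  exact charSum_eq_zero_of_shift χ hne fun d hd => U.mul_mem hd hu

lemma charSum_univ_of_ne_one (h : χ ≠ 1) : charSum χ (Set.univ : Set G) = 0 := by
  have hnp : ¬ IsPrincipalOn χ (⊤ : Subgroup G) := by
    intro hpr
    exact h (MonoidHom.ext fun g => by rw [hpr g (Subgroup.mem_top g)]; rfl)
  simpa using charSum_subgroup_of_not_principal χ hnp

lemma charSum_subgroup_of_principal {U : Subgroup G} (h : IsPrincipalOn χ U) :
    charSum χ (U : Set G) = (Nat.card U : ℂ) := by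
  rw [charSum_of_forall_eq_one χ h]; rfl

lemma charSum_union {A B : Set G} (h : Disjoint A B) :
    charSum χ (A ∪ B) = charSum χ A + charSum χ B :=
  finsum_mem_union h (Set.toFinite A) (Set.toFinite B)

lemma charSum_iUnion {n : ℕ} {f : Fin n → Set G}
    (h : Pairwise (Function.onFun Disjoint f)) :
    charSum χ (⋃ i, f i) = ∑ i, charSum χ (f i) := by
  rw [charSum, finsum_mem_iUnion h (fun i => Set.toFinite (f i))]
  exact finsum_eq_sum_of_fintype _

lemma charSum_lift (V : Subgroup G) (N : Subgroup V) [N.Normal]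
    (hker : N ≤ (χ.comp V.subtype).ker) (S : Set (V ⧸ N)) :
    charSum χ (Subtype.val '' ((QuotientGroup.mk' N) ⁻¹' S))
      = (Nat.card N : ℂ) *
        charSum (QuotientGroup.lift N (χ.comp V.subtype) hker) S := by
  classical
  set χb := QuotientGroup.lift N (χ.comp V.subtype) hker with hχb
  set T : Set V := (QuotientGroup.mk' N) ⁻¹' S with hTdef
  have h1 : charSum χ (Subtype.val '' T) = ∑ᶠ x ∈ T, (χ (x : G) : ℂ) :=
    finsum_mem_image (Set.injOn_of_injective Subtype.val_injective)
  rw [h1, finsum_mem_eq_finite_toFinset_sum _ (Set.toFinite T)]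
  rw [← Finset.sum_fiberwise_of_maps_to (g := QuotientGroup.mk' N)
    (t := (Set.toFinite S).toFinset)
    (fun x hx => by
      simp only [Set.Finite.mem_toFinset] at hx ⊢
      exact hx)]
  rw [charSum, finsum_mem_eq_finite_toFinset_sum _ (Set.toFinite S), Finset.mul_sum]
  refine Finset.sum_congr rfl fun q hq => ?_
  have hfib : ∀ x ∈ (Set.toFinite T).toFinset.filter (fun i => QuotientGroup.mk' N i = q),
      (χ (x : G) : ℂ) = (χb q : ℂ) := by
    intro x hx
    rw [Finset.mem_filter] at hx
    rw [← hx.2]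
    rw [hχb, QuotientGroup.mk'_apply]
    exact congrArg Units.val (QuotientGroup.lift_mk' N hker x).symm
  rw [Finset.sum_congr rfl hfib, Finset.sum_const, nsmul_eq_mul]
  congr 1
  have hq' : q ∈ S := (Set.Finite.mem_toFinset _).mp hq
  have hfil : (Set.toFinite T).toFinset.filter (fun i => QuotientGroup.mk' N i = q)
      = (Set.toFinite (QuotientGroup.mk ⁻¹' ({q} : Set (V ⧸ N)))).toFinset := by
    ext x
    simp only [Finset.mem_filter, Set.Finite.mem_toFinset, hTdef, Set.mem_preimage,
      Set.mem_singleton_iff, QuotientGroup.mk'_apply]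
    constructor
    · rintro ⟨-, h⟩; exact h
    · intro h; exact ⟨h ▸ hq', h⟩
  rw [hfil]
  have hcardfib := Nat.card_congr (QuotientGroup.preimageMkEquivSubgroupProdSet N
    ({q} : Set (V ⧸ N)))
  rw [Nat.card_prod] at hcardfib
  have hcq : Nat.card ({q} : Set (V ⧸ N)) = 1 := by simp
  rw [hcq, mul_one] at hcardfib
  rw [← Set.ncard_eq_toFinset_card _ _, ← Nat.card_coe_set_eq, hcardfib]

lemma card_lift (V : Subgroup G) (N : Subgroup V) [N.Normal] (S : Set (V ⧸ N)) :
    Nat.card (Subtype.val '' ((QuotientGroup.mk' N) ⁻¹' S) : Set G)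
      = Nat.card N * Nat.card S := by
  rw [Nat.card_coe_set_eq, Set.ncard_image_of_injective _ Subtype.val_injective,
    ← Nat.card_coe_set_eq]
  have hcard := Nat.card_congr (QuotientGroup.preimageMkEquivSubgroupProdSet N S)
  rw [Nat.card_prod] at hcard
  exact hcard

lemma card_coe_sub (B : Subgroup G) : (Nat.card ((B : Set G) : Type _)) = Nat.card B := rfl

lemma card_iUnion_complex {n : ℕ} {f : Fin n → Set G}
    (h : Pairwise (Function.onFun Disjoint f)) :
    (Nat.card (⋃ i, f i) : ℂ) = ∑ i, (Nat.card (f i) : ℂ) := by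
  have h1 := charSum_iUnion (G := G) 1 h
  rw [charSum_of_forall_eq_one 1 (fun d _ => rfl)] at h1
  rw [h1]
  exact Finset.sum_congr rfl fun i _ => (charSum_of_forall_eq_one 1 (fun d _ => rfl))

lemma charSum_subgroup_decomp {B W : Subgroup G} (h : B ≤ W) :
    charSum χ (W : Set G) = charSum χ (B : Set G) + charSum χ ((W : Set G) \ (B : Set G)) := by
  conv_lhs => rw [← Set.union_diff_cancel (show (B : Set G) ⊆ (W : Set G) from h)]
  exact charSum_union χ Set.disjoint_sdiff_right

lemma spread_cover {n : ℕ} (U B : Subgroup G) (W : Fin (n+1) → Subgroup G)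
    (hBW : ∀ k, B ≤ W k) (hWU : ∀ k, (W k) ≤ U)
    (hpair : ∀ k l, k ≠ l → W k ⊓ W l = B)
    (hcard : (Nat.card U : ℂ) + (n+1 : ℂ) * (Nat.card B : ℂ)
      = (Nat.card B : ℂ) + ∑ k, (Nat.card (W k) : ℂ)) :
    ∀ x ∈ U, ∃ k, x ∈ W k := by
  classical
  set f : Fin (n+1) → Set G := fun k => (W k : Set G) \ (B : Set G) with hf
  have hdisj : Pairwise (Function.onFun Disjoint f) := by
    intro k l hkl
    rw [Function.onFun, Set.disjoint_left]
    rintro x ⟨hxW, hxB⟩ ⟨hxW', _⟩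
    exact hxB (by rw [← hpair k l hkl]; exact ⟨hxW, hxW'⟩)
  set A : Set G := (B : Set G) ∪ ⋃ k, f k with hA
  have hAU : A ⊆ (U : Set G) := by
    rintro x (hx | hx)
    · exact hWU 0 (hBW 0 hx)
    · obtain ⟨s, ⟨k, rfl⟩, hxs⟩ := hx
      exact hWU k hxs.1
  have hdisj2 : Disjoint (B : Set G) (⋃ k, f k) := by
    rw [Set.disjoint_left]
    rintro x hx ⟨s, ⟨k, rfl⟩, hxs⟩
    exact hxs.2 hx
  have hcardA : (Nat.card A : ℂ) = (Nat.card U : ℂ) := by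
    have h1 := charSum_union (G := G) 1 hdisj2
    rw [charSum_of_forall_eq_one 1 (fun d _ => rfl), charSum_of_forall_eq_one 1 (fun d _ => rfl),
      charSum_of_forall_eq_one 1 (fun d _ => rfl), ← hA] at h1
    rw [h1, card_iUnion_complex hdisj, card_coe_sub]
    have h2 : ∀ k, (Nat.card (f k) : ℂ) = (Nat.card (W k) : ℂ) - (Nat.card B : ℂ) := by
      intro k
      have h3 := charSum_subgroup_decomp (G := G) 1 (hBW k)
      rw [charSum_of_forall_eq_one 1 (fun d _ => rfl), charSum_of_forall_eq_one 1 (fun d _ => rfl),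
        charSum_of_forall_eq_one 1 (fun d _ => rfl), card_coe_sub, card_coe_sub] at h3
      rw [hf]
      linear_combination -h3
    rw [Finset.sum_congr rfl fun k _ => h2 k, Finset.sum_sub_distrib, Finset.sum_const]
    simp only [Finset.card_univ, Fintype.card_fin, nsmul_eq_mul]
    push_cast
    linear_combination -hcard
  have hAeq : A = (U : Set G) := by
    apply Set.eq_of_subset_of_ncard_le hAU
    rw [← Nat.card_coe_set_eq, ← Nat.card_coe_set_eq]
    have hAn : Nat.card A = Nat.card U := Nat.cast_injective hcardA
    exact le_of_eq (by rw [card_coe_sub]; exact hAn.symm)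
  intro x hx
  have hxA : x ∈ A := hAeq ▸ hx
  rcases hxA with hxB | ⟨s, ⟨k, rfl⟩, hxs⟩
  · exact ⟨0, hBW 0 hxB⟩
  · exact ⟨k, hxs.1⟩

lemma spread_unique_principal {n : ℕ} (U B : Subgroup G)
    (W : Fin (n+1) → Subgroup G) (hn : 0 < n)
    (hBW : ∀ k, B ≤ W k) (hWU : ∀ k, (W k) ≤ U)
    (hpair : ∀ k l, k ≠ l → W k ⊓ W l = B)
    (hcardW : ∀ k, (Nat.card (W k) : ℂ) = (n : ℂ) * (Nat.card B : ℂ))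
    (hcover : ∀ x ∈ U, ∃ k, x ∈ W k)
    (hB : IsPrincipalOn χ B) (hU : ¬ IsPrincipalOn χ U) :
    ∃! k, IsPrincipalOn χ (W k) := by
  classical
  set f : Fin (n+1) → Set G := fun k => (W k : Set G) \ (B : Set G) with hf
  have hdisj : Pairwise (Function.onFun Disjoint f) := by
    intro k l hkl
    rw [Function.onFun, Set.disjoint_left]
    rintro x ⟨hxW, hxB⟩ ⟨hxW', _⟩
    exact hxB (by rw [← hpair k l hkl]; exact ⟨hxW, hxW'⟩)
  have hdisj2 : Disjoint (B : Set G) (⋃ k, f k) := by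
    rw [Set.disjoint_left]
    rintro x hx ⟨s, ⟨k, rfl⟩, hxs⟩
    exact hxs.2 hx
  have hAeq : (B : Set G) ∪ (⋃ k, f k) = (U : Set G) := by
    apply Set.Subset.antisymm
    · rintro x (hx | hx)
      · exact hWU 0 (hBW 0 hx)
      · obtain ⟨s, ⟨k, rfl⟩, hxs⟩ := hx
        exact hWU k hxs.1
    · intro x hx
      obtain ⟨k, hk⟩ := hcover x hx
      by_cases hxB : x ∈ (B : Set G)
      · exact Or.inl hxB
      · exact Or.inr (Set.mem_iUnion.mpr ⟨k, hk, hxB⟩)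
  set P : Finset (Fin (n+1)) := Finset.univ.filter (fun k => IsPrincipalOn χ (W k)) with hP
  have hcount : (P.card : ℂ) * ((n : ℂ) * (Nat.card B : ℂ)) = (n : ℂ) * (Nat.card B : ℂ) := by
    have h0 : charSum χ (U : Set G) = 0 := charSum_subgroup_of_not_principal χ hU
    rw [← hAeq, charSum_union χ hdisj2, charSum_iUnion χ hdisj,
      charSum_subgroup_of_principal χ hB] at h0
    have hWk : ∀ k, charSum χ (f k) = charSum χ ((W k : Set G)) - (Nat.card B : ℂ) := by
      intro k
      have h3 := charSum_subgroup_decomp χ (hBW k)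
      rw [charSum_subgroup_of_principal χ hB] at h3
      rw [hf]; linear_combination -h3
    rw [Finset.sum_congr rfl fun k _ => hWk k, Finset.sum_sub_distrib, Finset.sum_const] at h0
    have hsplit : ∑ k, charSum χ ((W k : Set G))
        = (P.card : ℂ) * ((n : ℂ) * (Nat.card B : ℂ)) := by
      rw [← Finset.sum_filter_add_sum_filter_not Finset.univ (fun k => IsPrincipalOn χ (W k))]
      have e1 : ∑ k ∈ Finset.univ.filter (fun k => IsPrincipalOn χ (W k)),
          charSum χ ((W k : Set G)) = (P.card : ℂ) * ((n:ℂ) * (Nat.card B : ℂ)) := by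
        rw [Finset.sum_congr rfl (fun k hk =>
          (charSum_subgroup_of_principal χ (Finset.mem_filter.mp hk).2).trans (hcardW k)),
          Finset.sum_const, nsmul_eq_mul, hP]
      have e2 : ∑ k ∈ Finset.univ.filter (fun k => ¬ IsPrincipalOn χ (W k)),
          charSum χ ((W k : Set G)) = 0 :=
        Finset.sum_eq_zero fun k hk =>
          charSum_subgroup_of_not_principal χ (Finset.mem_filter.mp hk).2
      rw [e1, e2, add_zero]
    rw [hsplit] at h0
    simp only [Finset.card_univ, Fintype.card_fin, nsmul_eq_mul] at h0
    push_cast at h0 ⊢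
    linear_combination h0
  have hBne : (Nat.card B : ℂ) ≠ 0 := Nat.cast_ne_zero.mpr Nat.card_pos.ne'
  have hncard : (n:ℂ) * (Nat.card B : ℂ) ≠ 0 :=
    mul_ne_zero (by exact_mod_cast hn.ne') hBne
  have hPcard : (P.card : ℂ) = 1 :=
    mul_right_cancel₀ hncard (by rw [one_mul]; exact hcount)
  have hP1 : P.card = 1 := by exact_mod_cast hPcard
  obtain ⟨k, hk⟩ := Finset.card_eq_one.mp hP1
  refine ⟨k, ?_, ?_⟩
  · have hkP : k ∈ P := hk ▸ Finset.mem_singleton_self k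
    exact (Finset.mem_filter.mp hkP).2
  · intro l hl
    have hlP : l ∈ P := Finset.mem_filter.mpr ⟨Finset.mem_univ l, hl⟩
    rw [hk] at hlP
    exact Finset.mem_singleton.mp hlP

end helpersA

theorem stmt_12 {G : Type*} [CommGroup G] [Finite G] (p s c t : ℕ)
    (hp : p.Prime) (hs : 0 < s) (ht : t = p ^ s)
    (Q G' : Subgroup G) (hQG' : Q ≤ G')
    (hG : Nat.card G = t ^ 4 * c ^ 2)
    (hQcard : Nat.card Q = p ^ (2 * s)) (hQexp : ∀ g ∈ Q, g ^ p = 1)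
    (hquotcard : Nat.card (G ⧸ G') = p ^ (2 * s)) (hquotexp : ∀ g : G, g ^ p ∈ G')
    (H V : Fin (t + 1) → Subgroup G)
    (hHQ : ∀ i, H i ≤ Q) (hHcard : ∀ i, Nat.card (H i) = p ^ s)
    (hHspread : ∀ i j, i ≠ j → H i ⊓ H j = ⊥)
    (hG'V : ∀ i, G' ≤ V i) (hVcard : ∀ i, Nat.card (V i) = p ^ s * Nat.card G')
    (hVspread : ∀ i j, i ≠ j → V i ⊓ V j = G')
    (hHV : ∀ i : Fin t, H i.succ ≤ V i.succ)
    (hpart : ∀ i : Fin t,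
      ∃ S : Fin t → Set ((V i.succ) ⧸ (H i.succ).subgroupOf (V i.succ)),
        IsLPPartition c t S
          ((G'.subgroupOf (V i.succ)).map
            (QuotientGroup.mk' ((H i.succ).subgroupOf (V i.succ))))
          ((Q.subgroupOf (V i.succ)).map
            (QuotientGroup.mk' ((H i.succ).subgroupOf (V i.succ))))) :
    ∃ R : Fin t → Set G, IsLPPartition (t * c) t R (V 0) (H 0) := by
  classical
  -- numerics
  have ht2 : 2 ≤ t := by
    rw [ht]
    calc 2 ≤ p := hp.two_le
    _ ≤ p ^ s := Nat.le_self_pow hs.ne' p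
  have ht1 : 1 ≤ t := le_trans one_le_two ht2
  have htpos : 0 < t := ht1
  have hc : 0 < c := by
    rcases Nat.eq_zero_or_pos c with hc0 | hc0
    · exfalso
      have := Nat.card_pos (α := G)
      rw [hG, hc0] at this
      simp at this
    · exact hc0
  have hG'card : Nat.card G' = t ^ 2 * c ^ 2 := by
    have h1 := Subgroup.card_eq_card_quotient_mul_card_subgroup G'
    rw [hquotcard, hG] at h1
    have hp2s : p ^ (2 * s) = t ^ 2 := by rw [ht, ← pow_mul, mul_comm]
    rw [hp2s] at h1
    have ht2pos : 0 < t ^ 2 := by positivity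
    apply Nat.eq_of_mul_eq_mul_left ht2pos
    rw [← h1]; ring
  have hQcard' : Nat.card Q = t ^ 2 := by
    rw [hQcard, ht, ← pow_mul, mul_comm]
  have hHcard' : ∀ k, Nat.card (H k) = t := fun k => by rw [hHcard k, ht]
  have hVcard' : ∀ k, Nat.card (V k) = t ^ 3 * c ^ 2 := fun k => by
    rw [hVcard k, hG'card, ← ht]; ring
  -- coverings
  have hVcover : ∀ x : G, ∃ k, x ∈ V k := by
    have hcov := spread_cover (n := t) (⊤ : Subgroup G) G' V
      hG'V (fun k => le_top) hVspread ?_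
    · intro x; exact hcov x trivial
    · rw [Finset.sum_congr rfl (fun k _ => by rw [hVcard' k]), Finset.sum_const,
        Finset.card_univ, Fintype.card_fin, Subgroup.card_top, hG, hG'card]
      push_cast
      ring
  have hHcover : ∀ x ∈ Q, ∃ k, x ∈ H k := by
    apply spread_cover (n := t) Q (⊥ : Subgroup G) H (fun k => bot_le) hHQ hHspread
    rw [Finset.sum_congr rfl (fun k _ => by rw [hHcard' k]), Finset.sum_const,
      Finset.card_univ, Fintype.card_fin, Subgroup.card_bot, hQcard']
    push_cast
    ring
  -- unique principal
  have hVunique : ∀ χ : G →* ℂˣ, χ ≠ 1 → IsPrincipalOn χ G' →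
      ∃! k, IsPrincipalOn χ (V k) := by
    intro χ hχ hχG'
    apply spread_unique_principal χ (⊤ : Subgroup G) G' V htpos
      hG'V (fun k => le_top) hVspread ?_ ?_ hχG' ?_
    · intro k
      rw [hVcard' k, hG'card]
      push_cast
      ring
    · intro x _; exact hVcover x
    · intro hpr
      exact hχ (MonoidHom.ext fun g => by rw [hpr g (Subgroup.mem_top g)]; rfl)
  have hHunique : ∀ χ : G →* ℂˣ, ¬ IsPrincipalOn χ Q →
      ∃! k, IsPrincipalOn χ (H k) := by
    intro χ hχQ
    apply spread_unique_principal χ Q (⊥ : Subgroup G) H htpos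
      (fun k => bot_le) hHQ hHspread ?_ hHcover ?_ hχQ
    · intro k
      rw [hHcard' k, Subgroup.card_bot]
      push_cast
      ring
    · intro u hu
      rw [Subgroup.mem_bot.mp hu, map_one]
  -- the partition data
  choose S hS using hpart
  set N : (i : Fin t) → Subgroup (V i.succ) := fun i => (H i.succ).subgroupOf (V i.succ)
    with hN
  set piece : Fin t → Fin t → Set G := fun i j =>
    Subtype.val '' ((QuotientGroup.mk' (N i)) ⁻¹' (S i j)) with hpiece
  have hNcard : ∀ i, Nat.card (N i) = t := fun i => by
    rw [hN]
    rw [Nat.card_congr (Subgroup.subgroupOfEquivOfLe (hHV i)).toEquiv, hHcard' i.succ]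
  -- basic piece facts
  have hpiece_sub : ∀ i j, piece i j ⊆ (V i.succ : Set G) \ (G' : Set G) := by
    intro i j x hx
    obtain ⟨v, hv, rfl⟩ := hx
    refine ⟨v.2, ?_⟩
    intro hvG'
    have hvmem : QuotientGroup.mk' (N i) v ∈
        (G'.subgroupOf (V i.succ)).map (QuotientGroup.mk' (N i)) :=
      Subgroup.mem_map.mpr ⟨v, Subgroup.mem_subgroupOf.mpr hvG', rfl⟩
    have hunion := (hS i).2.2.2.2.2.1
    have hx2 : QuotientGroup.mk' (N i) v ∈ ⋃ j', S i j' := Set.mem_iUnion.mpr ⟨j, hv⟩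
    rw [hunion] at hx2
    exact hx2.2 hvmem
  have hpiece_closed : ∀ i j, ∀ d ∈ piece i j, ∀ h ∈ H i.succ, d * h ∈ piece i j := by
    intro i j d hd h hh
    obtain ⟨v, hv, rfl⟩ := hd
    refine ⟨v * ⟨h, hHV i hh⟩, ?_, rfl⟩
    have hmem : (⟨h, hHV i hh⟩ : V i.succ) ∈ N i := Subgroup.mem_subgroupOf.mpr hh
    show QuotientGroup.mk' (N i) (v * ⟨h, hHV i hh⟩) ∈ S i j
    rw [map_mul]
    have h1 : QuotientGroup.mk' (N i) (⟨h, hHV i hh⟩ : V i.succ) = 1 :=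
      (QuotientGroup.eq_one_iff _).mpr hmem
    rw [h1, mul_one]
    exact hv
  have hpiece_card : ∀ i j, Nat.card (piece i j) = t * ((t - 1) * c ^ 2) := by
    intro i j
    rw [hpiece]
    rw [card_lift, hNcard i, (hS i).2.2.2.1 j]
  have hpiece_disj : ∀ i i' j j' (x : G), x ∈ piece i j → x ∈ piece i' j' →
      i = i' ∧ j = j' := by
    intro i i' j j' x hx hx'
    have hii' : i = i' := by
      by_contra hne
      have h1 := hpiece_sub i j hx
      have h2 := hpiece_sub i' j' hx'
      have hxm : x ∈ V i.succ ⊓ V i'.succ := ⟨h1.1, h2.1⟩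
      rw [hVspread _ _ (fun hcontra => hne (Fin.succ_injective _ hcontra))] at hxm
      exact h1.2 hxm
    subst hii'
    refine ⟨rfl, ?_⟩
    by_contra hne
    obtain ⟨v, hv, hvx⟩ := hx
    obtain ⟨v', hv', hvx'⟩ := hx'
    have hvv : v = v' := Subtype.val_injective (hvx.trans hvx'.symm)
    subst hvv
    exact Set.disjoint_left.mp ((hS i).2.2.2.2.1 j j' hne) hv hv'
  have hpiece_union : ∀ i, (⋃ j, piece i j) = (V i.succ : Set G) \ (G' : Set G) := by
    intro i
    apply Set.Subset.antisymm
    · exact Set.iUnion_subset fun j => hpiece_sub i j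
    · rintro x ⟨hxV, hxG'⟩
      set v : V i.succ := ⟨x, hxV⟩ with hvdef
      have hmkv : QuotientGroup.mk' (N i) v ∈ Set.univ \
          (((G'.subgroupOf (V i.succ)).map (QuotientGroup.mk' (N i)) : Subgroup _) :
            Set (V i.succ ⧸ N i)) := by
        refine ⟨trivial, ?_⟩
        intro hmem
        obtain ⟨y, hy, hyv⟩ := Subgroup.mem_map.mp hmem
        obtain ⟨z, hz, hzy⟩ := (QuotientGroup.mk'_eq_mk' _).mp hyv
        have hyG' : (y : G) ∈ G' := Subgroup.mem_subgroupOf.mp hy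
        have hzG' : ((z : V i.succ) : G) ∈ G' :=
          hQG' (hHQ i.succ (Subgroup.mem_subgroupOf.mp hz))
        apply hxG'
        have hxyz : (v : G) = (y : G) * (z : G) := by rw [← hzy]; rfl
        show x ∈ G'
        rw [show x = (v : G) from rfl, hxyz]
        exact G'.mul_mem hyG' hzG'
      rw [← (hS i).2.2.2.2.2.1] at hmkv
      obtain ⟨sj, ⟨j, rfl⟩, hj⟩ := hmkv
      exact Set.mem_iUnion.mpr ⟨j, ⟨v, hj, rfl⟩⟩
  -- character sums of pieces
  have hpiece_char_zero : ∀ (χ : G →* ℂˣ) i j, ¬ IsPrincipalOn χ (H i.succ) →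
      charSum χ (piece i j) = 0 := by
    intro χ i j hχ
    simp only [IsPrincipalOn, not_forall] at hχ
    obtain ⟨h0, hh0, hne⟩ := hχ
    exact charSum_eq_zero_of_shift χ hne (fun d hd => hpiece_closed i j d hd h0 hh0)
  
  -- lifted characters
  have hker : ∀ (χ : G →* ℂˣ) (i : Fin t), IsPrincipalOn χ (H i.succ) →
      N i ≤ (χ.comp (V i.succ).subtype).ker := by
    intro χ i hpr n hn
    rw [MonoidHom.mem_ker]
    exact hpr _ (Subgroup.mem_subgroupOf.mp hn)
  have hlift_mk : ∀ (χ : G →* ℂˣ) (i : Fin t) (hk : N i ≤ (χ.comp (V i.succ).subtype).ker)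
      (v : V i.succ),
      QuotientGroup.lift (N i) (χ.comp (V i.succ).subtype) hk (QuotientGroup.mk' (N i) v)
        = χ (v : G) := by
    intro χ i hk v
    rw [QuotientGroup.mk'_apply]
    exact QuotientGroup.lift_mk' (N i) hk v
  have hlift_ne_one : ∀ (χ : G →* ℂˣ) (i : Fin t)
      (hk : N i ≤ (χ.comp (V i.succ).subtype).ker),
      ¬ IsPrincipalOn χ (V i.succ) →
      QuotientGroup.lift (N i) (χ.comp (V i.succ).subtype) hk ≠ 1 := by
    intro χ i hk hnp hb1
    apply hnp
    intro v hv
    have h2 := hlift_mk χ i hk ⟨v, hv⟩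
    rw [hb1] at h2
    simpa using h2.symm
  have hlift_prin : ∀ (χ : G →* ℂˣ) (i : Fin t)
      (hk : N i ≤ (χ.comp (V i.succ).subtype).ker)
      (K : Subgroup G), K ≤ V i.succ → IsPrincipalOn χ K →
      IsPrincipalOn (QuotientGroup.lift (N i) (χ.comp (V i.succ).subtype) hk)
        ((K.subgroupOf (V i.succ)).map (QuotientGroup.mk' (N i))) := by
    intro χ i hk K hKV hpr u hu
    obtain ⟨y, hy, rfl⟩ := Subgroup.mem_map.mp hu
    rw [hlift_mk χ i hk y]
    exact hpr _ (Subgroup.mem_subgroupOf.mp hy)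
  have hlift_nprin : ∀ (χ : G →* ℂˣ) (i : Fin t)
      (hk : N i ≤ (χ.comp (V i.succ).subtype).ker)
      (K : Subgroup G) (hKV : K ≤ V i.succ), ¬ IsPrincipalOn χ K →
      ¬ IsPrincipalOn (QuotientGroup.lift (N i) (χ.comp (V i.succ).subtype) hk)
        ((K.subgroupOf (V i.succ)).map (QuotientGroup.mk' (N i))) := by
    intro χ i hk K hKV hnp hb
    apply hnp
    intro u hu
    have hmem : QuotientGroup.mk' (N i) ⟨u, hKV hu⟩ ∈
        (K.subgroupOf (V i.succ)).map (QuotientGroup.mk' (N i)) :=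
      Subgroup.mem_map.mpr ⟨⟨u, hKV hu⟩, Subgroup.mem_subgroupOf.mpr hu, rfl⟩
    have h2 := hb _ hmem
    rw [hlift_mk χ i hk ⟨u, hKV hu⟩] at h2
    exact h2
  have hpiece_char_lift : ∀ (χ : G →* ℂˣ) (i : Fin t)
      (hk : N i ≤ (χ.comp (V i.succ).subtype).ker) (j : Fin t),
      charSum χ (piece i j) = (t : ℂ) *
        charSum (QuotientGroup.lift (N i) (χ.comp (V i.succ).subtype) hk) (S i j) := by
    intro χ i hk j
    rw [hpiece]
    rw [charSum_lift χ (V i.succ) (N i) hk (S i j), hNcard i]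
  -- per-column facts
  have hRdisj : ∀ j, Pairwise (Function.onFun Disjoint (fun i => piece i j)) := by
    intro j a b hab
    rw [Function.onFun, Set.disjoint_left]
    intro x hx hx'
    exact hab (hpiece_disj a b j j x hx hx').1
  have hRchar : ∀ (χ : G →* ℂˣ) j, charSum χ (⋃ i, piece i j) = ∑ i, charSum χ (piece i j) :=
    fun χ j => charSum_iUnion χ (hRdisj j)
  have hconstmul : ∀ (χ : G →* ℂˣ) (z : ℂ), (∀ j, charSum χ (⋃ i, piece i j) = z) →
      charMultiset χ (fun j => ⋃ i, piece i j) = Multiset.replicate t z := by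
    intro χ z hz
    rw [charMultiset, Multiset.map_congr rfl (fun j _ => hz j), Multiset.map_const']
    congr 1
    show Finset.univ.card = t
    rw [Finset.card_univ, Fintype.card_fin]
  -- the result
  refine ⟨fun j => ⋃ i, piece i j, ?_, ?_, ?_, ?_, ?_, ?_, ?_⟩
  · rw [hG]; ring
  · rw [hVcard' 0]; ring
  · exact fun x hx => hG'V 0 (hQG' (hHQ 0 hx))
  · intro j
    have h1 : (Nat.card (⋃ i, piece i j) : ℂ) = ∑ i, (Nat.card (piece i j) : ℂ) :=
      card_iUnion_complex (hRdisj j)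
    rw [Finset.sum_congr rfl (fun i _ => by rw [hpiece_card i j]), Finset.sum_const,
      Finset.card_univ, Fintype.card_fin, nsmul_eq_mul] at h1
    have h2 : (Nat.card (⋃ i, piece i j) : ℂ) = (((t - 1) * (t * c) ^ 2 : ℕ) : ℂ) := by
      rw [h1]
      push_cast [Nat.cast_sub ht1]
      ring
    exact_mod_cast h2
  · intro j j' hjj
    rw [Set.disjoint_left]
    rintro x ⟨s1, ⟨i, rfl⟩, hx⟩ ⟨s2, ⟨i', rfl⟩, hx'⟩
    exact hjj (hpiece_disj i i' j j' x hx hx').2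
  · apply Set.Subset.antisymm
    · rintro x ⟨s1, ⟨j, rfl⟩, hx⟩
      obtain ⟨s2, ⟨i, rfl⟩, hx2⟩ := hx
      have hsub := hpiece_sub i j hx2
      refine ⟨trivial, ?_⟩
      intro hxV0
      have hxm : x ∈ V i.succ ⊓ V 0 := ⟨hsub.1, hxV0⟩
      rw [hVspread i.succ 0 (Fin.succ_ne_zero i)] at hxm
      exact hsub.2 hxm
    · rintro x ⟨-, hxV0⟩
      obtain ⟨k, hk⟩ := hVcover x
      have hk0 : k ≠ 0 := fun h => hxV0 (h ▸ hk)
      obtain ⟨i, rfl⟩ := Fin.eq_succ_of_ne_zero hk0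
      have hxG' : x ∉ (G' : Set G) := fun h => hxV0 (hG'V 0 h)
      have hxu : x ∈ ⋃ j, piece i j := by rw [hpiece_union i]; exact ⟨hk, hxG'⟩
      obtain ⟨s1, ⟨j, rfl⟩, hj⟩ := hxu
      exact Set.mem_iUnion.mpr ⟨j, Set.mem_iUnion.mpr ⟨i, hj⟩⟩
  · intro χ hχ
    refine ⟨?_, ?_, ?_⟩
    · -- principal on V 0
      intro hprV0
      have hprG' : IsPrincipalOn χ G' := fun u hu => hprV0 u (hG'V 0 hu)
      have hprQ : IsPrincipalOn χ Q := fun u hu => hprG' u (hQG' hu)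
      obtain ⟨k, hkp, huniq⟩ := hVunique χ hχ hprG'
      have hk0 : k = 0 := (huniq 0 hprV0).symm
      subst hk0
      have hnpV : ∀ i : Fin t, ¬ IsPrincipalOn χ (V i.succ) := fun i hpr =>
        Fin.succ_ne_zero i (huniq i.succ hpr)
      apply hconstmul
      intro j
      rw [hRchar χ j]
      have hper : ∀ i : Fin t, charSum χ (piece i j) = (t : ℂ) * (-(c:ℂ)^2) := by
        intro i
        have hprH : IsPrincipalOn χ (H i.succ) := fun u hu => hprQ u (hHQ i.succ hu)
        have hk := hker χ i hprH
        rw [hpiece_char_lift χ i hk j]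
        congr 1
        set χb := QuotientGroup.lift (N i) (χ.comp (V i.succ).subtype) hk with hχb
        have hbne : χb ≠ 1 := hlift_ne_one χ i hk (hnpV i)
        have hbpr := hlift_prin χ i hk G' (hG'V i.succ) hprG'
        have hmul := ((hS i).2.2.2.2.2.2 χb hbne).1 hbpr
        have hmem : charSum χb (S i j) ∈ charMultiset χb (S i) :=
          Multiset.mem_map_of_mem _ (Finset.mem_val.mpr (Finset.mem_univ j))
        rw [hmul] at hmem
        exact Multiset.eq_of_mem_replicate hmem
      rw [Finset.sum_congr rfl (fun i _ => hper i), Finset.sum_const, Finset.card_univ,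
        Fintype.card_fin, nsmul_eq_mul]
      push_cast
      ring
    · -- not principal on V 0, principal on H 0
      intro hnpV0 hprH0
      apply hconstmul
      intro j
      rw [hRchar χ j]
      by_cases hG'p : IsPrincipalOn χ G'
      · obtain ⟨k, hkp, huniq⟩ := hVunique χ hχ hG'p
        have hk0 : k ≠ 0 := fun h => hnpV0 (h ▸ hkp)
        obtain ⟨i0, rfl⟩ := Fin.eq_succ_of_ne_zero hk0
        have hprQ : IsPrincipalOn χ Q := fun u hu => hG'p u (hQG' hu)
        have hper : ∀ i : Fin t, i ≠ i0 → charSum χ (piece i j) = (t:ℂ) * (-(c:ℂ)^2) := by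
          intro i hii0
          have hprH : IsPrincipalOn χ (H i.succ) := fun u hu => hprQ u (hHQ i.succ hu)
          have hk := hker χ i hprH
          rw [hpiece_char_lift χ i hk j]
          congr 1
          set χb := QuotientGroup.lift (N i) (χ.comp (V i.succ).subtype) hk with hχb
          have hnpV : ¬ IsPrincipalOn χ (V i.succ) := fun hpr =>
            hii0 (Fin.succ_injective _ (huniq i.succ hpr))
          have hbne : χb ≠ 1 := hlift_ne_one χ i hk hnpV
          have hbpr := hlift_prin χ i hk G' (hG'V i.succ) hG'p
          have hmul := ((hS i).2.2.2.2.2.2 χb hbne).1 hbpr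
          have hmem : charSum χb (S i j) ∈ charMultiset χb (S i) :=
            Multiset.mem_map_of_mem _ (Finset.mem_val.mpr (Finset.mem_univ j))
          rw [hmul] at hmem
          exact Multiset.eq_of_mem_replicate hmem
        have hi0 : charSum χ (piece i0 j) = (t:ℂ) * (((t:ℂ)-1) * (c:ℂ)^2) := by
          have hall : ∀ d ∈ piece i0 j, χ d = 1 := fun d hd =>
            hkp d (hpiece_sub i0 j hd).1
          rw [charSum_of_forall_eq_one χ hall, hpiece_card i0 j]
          push_cast [Nat.cast_sub ht1]
          ring
        rw [← Finset.sum_erase_add _ _ (Finset.mem_univ i0), hi0,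
          Finset.sum_congr rfl (fun i hi => hper i (Finset.ne_of_mem_erase hi)),
          Finset.sum_const, Finset.card_erase_of_mem (Finset.mem_univ i0),
          Finset.card_univ, Fintype.card_fin, nsmul_eq_mul]
        push_cast [Nat.cast_sub ht1]
        ring
      · by_cases hQp : IsPrincipalOn χ Q
        · apply Finset.sum_eq_zero
          intro i _
          have hprH : IsPrincipalOn χ (H i.succ) := fun u hu => hQp u (hHQ i.succ hu)
          have hk := hker χ i hprH
          rw [hpiece_char_lift χ i hk j]
          set χb := QuotientGroup.lift (N i) (χ.comp (V i.succ).subtype) hk with hχb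
          have hnpVi : ¬ IsPrincipalOn χ (V i.succ) := fun hpr =>
            hG'p (fun u hu => hpr u (hG'V i.succ hu))
          have hbne : χb ≠ 1 := hlift_ne_one χ i hk hnpVi
          have hbnpr := hlift_nprin χ i hk G' (hG'V i.succ) hG'p
          have hbprQ := hlift_prin χ i hk Q (fun u hu => hG'V i.succ (hQG' hu)) hQp
          have hmul := ((hS i).2.2.2.2.2.2 χb hbne).2.1 hbnpr hbprQ
          have hmem : charSum χb (S i j) ∈ charMultiset χb (S i) :=
            Multiset.mem_map_of_mem _ (Finset.mem_val.mpr (Finset.mem_univ j))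
          rw [hmul] at hmem
          rw [Multiset.eq_of_mem_replicate hmem, mul_zero]
        · obtain ⟨k, hkp, huniq⟩ := hHunique χ hQp
          have hk0 : k = 0 := (huniq 0 hprH0).symm
          subst hk0
          apply Finset.sum_eq_zero
          intro i _
          exact hpiece_char_zero χ i j (fun hpr => Fin.succ_ne_zero i (huniq i.succ hpr))
    · -- not principal on H 0
      intro hnpH0
      have hnpQ : ¬ IsPrincipalOn χ Q := fun h => hnpH0 (fun u hu => h u (hHQ 0 hu))
      obtain ⟨k, hkp, huniq⟩ := hHunique χ hnpQ
      have hk0 : k ≠ 0 := fun h => hnpH0 (h ▸ hkp)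
      obtain ⟨i0, rfl⟩ := Fin.eq_succ_of_ne_zero hk0
      have hkk := hker χ i0 hkp
      set χb := QuotientGroup.lift (N i0) (χ.comp (V i0.succ).subtype) hkk with hχb
      have hnpVi : ¬ IsPrincipalOn χ (V i0.succ) := fun hpr =>
        hnpQ (fun u hu => hpr u (hG'V i0.succ (hQG' hu)))
      have hbne : χb ≠ 1 := hlift_ne_one χ i0 hkk hnpVi
      have hbnpQ := hlift_nprin χ i0 hkk Q (fun u hu => hG'V i0.succ (hQG' hu)) hnpQ
      have hmul := ((hS i0).2.2.2.2.2.2 χb hbne).2.2 hbnpQ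
      have hRj : ∀ j, charSum χ (⋃ i, piece i j) = (t:ℂ) * charSum χb (S i0 j) := by
        intro j
        rw [hRchar χ j]
        rw [Finset.sum_eq_single i0]
        · exact hpiece_char_lift χ i0 hkk j
        · intro i _ hii0
          exact hpiece_char_zero χ i j (fun hpr =>
            hii0 (Fin.succ_injective _ (huniq i.succ hpr)))
        · intro h; exact absurd (Finset.mem_univ i0) h
      show charMultiset χ (fun j => ⋃ i, piece i j) = _
      rw [charMultiset, Multiset.map_congr rfl (fun j _ => hRj j)]
      have hmm : (Finset.univ.val.map fun j => (t:ℂ) * charSum χb (S i0 j))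
          = Multiset.map (fun z => (t:ℂ) * z) (charMultiset χb (S i0)) := by
        rw [charMultiset, Multiset.map_map]
        rfl
      rw [hmm, hmul, Multiset.map_cons, Multiset.map_replicate]
      congr 1
      · push_cast
        ring
      · congr 1
        push_cast
        ring
end

section
/- Let c be a positive integer, G an abelian group of order 4c², and U a subgroup of order 2c. Then subsets P₁, P₂ of G are disjoint (4c², c(2c-1), c(c-1)) reversible Hadamard difference sets not containing 1_G with union G∖U if and only if {P₁, P₂} is a (c,2) LP-packing in G relative to U. -/
open Finset BigOperators

variable {G : Type*}

/-- `D` is a `(v,k,λ)` difference set in `G`. -/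
def IsDiffSet [Group G] (D : Set G) (v k : ℕ) (l : ℤ) : Prop :=
  Nat.card G = v ∧ Nat.card D = k ∧ ∀ g : G, g ≠ 1 → (diffCount D g : ℤ) = l


lemma aux_ds_latin {G : Type*} [CommGroup G] [Finite G] (c : ℕ) (D : Set G) :
    (IsDiffSet D (4 * c ^ 2) (c * (2 * c - 1)) ((c : ℤ) * ((c : ℤ) - 1)) ∧
      D⁻¹ = D ∧ (1 : G) ∉ D) ↔ IsLatinPDS D (2 * c) c := by
  constructor
  · rintro ⟨⟨hv, hk, hd⟩, hinv, h1⟩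
    refine ⟨⟨by rw [hv]; ring, hk, ?_⟩, h1, hinv⟩
    intro g hg
    constructor <;> intro _ <;> rw [hd g hg] <;> push_cast <;> ring
  · rintro ⟨⟨hv, hk, hd⟩, h1, hinv⟩
    refine ⟨⟨by rw [hv]; ring, hk, ?_⟩, hinv, h1⟩
    intro g hg
    by_cases h : g ∈ D
    · rw [(hd g hg).1 h]; push_cast; ring
    · rw [(hd g hg).2 h]; push_cast; ring

theorem stmt_19 {G : Type*} [CommGroup G] [Finite G] (c : ℕ) (hc : 0 < c)
    (hG : Nat.card G = 4 * c ^ 2) (U : Subgroup G) (hU : Nat.card U = 2 * c)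
    (P1 P2 : Set G) :
    (IsDiffSet P1 (4 * c ^ 2) (c * (2 * c - 1)) ((c : ℤ) * ((c : ℤ) - 1)) ∧
        P1⁻¹ = P1 ∧ (1 : G) ∉ P1 ∧
      IsDiffSet P2 (4 * c ^ 2) (c * (2 * c - 1)) ((c : ℤ) * ((c : ℤ) - 1)) ∧
        P2⁻¹ = P2 ∧ (1 : G) ∉ P2 ∧
      Disjoint P1 P2 ∧ P1 ∪ P2 = Set.univ \ (U : Set G)) ↔
      IsLPPacking c 2 ![P1, P2] U := by
  constructor
  · rintro ⟨h1, hi1, hn1, h2, hi2, hn2, hdisj, hun⟩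
    refine ⟨by rw [hG]; ring, hU, ?_, ?_, ?_⟩
    · intro i
      fin_cases i
      · simpa using (aux_ds_latin c P1).mp ⟨h1, hi1, hn1⟩
      · simpa using (aux_ds_latin c P2).mp ⟨h2, hi2, hn2⟩
    · intro i j hij
      fin_cases i <;> fin_cases j <;> simp_all <;> exact hdisj.symm
    · rw [← hun]; ext x; simp [Fin.exists_fin_two]
  · rintro ⟨hcard, hcU, hlat, hdisj, hun⟩
    obtain ⟨h1, hi1, hn1⟩ := (aux_ds_latin c P1).mpr (by simpa using hlat 0)
    obtain ⟨h2, hi2, hn2⟩ := (aux_ds_latin c P2).mpr (by simpa using hlat 1)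
    refine ⟨h1, hi1, hn1, h2, hi2, hn2, by simpa using hdisj 0 1 (by decide), ?_⟩
    rw [← hun]; ext x; simp [Fin.exists_fin_two]
end
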